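/- arXiv:2302.11440 — 3 statements merged into one kernel-verified Lean document; each statement's English description precedes it below -/
import Mathlib

section
/- Suppose A is a finite-dimensional graded-commutative real algebra, graded by degrees 0 through 3, satisfying Poincaré duality in dimension 3 (i.e. A^3 is one-dimensional and the multiplication pairing A^k × A^{3-k} → A^3 is nondegenerate for all k), and suppose there is an injective homomorphism of graded algebras A → ⋀*(ℝ^3). Then dim A^1 ≠ 2. -/
/-!
A basis `x, y` of `A¹` anticommutes and squares to zero, so `x y` annihilates all of `A¹`; by
Poincaré duality in degree 2 this forces `x y = 0`. But `Φ` sends `x` and `y` to linearly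
independent vectors `u, v ∈ ℝ³`, and `u ∧ v ≠ 0` in the exterior algebra.
-/

open ExteriorAlgebra

theorem ExteriorAlgebra.ι_mul_ι_ne_zero {K E : Type*} [Field K] [AddCommGroup E] [Module K E]
    {u v : E} (h : LinearIndependent K ![u, v]) : ι K u * ι K v ≠ 0 := by
  -- `ι u * ι v` is the exterior monomial of `![u, v]` on the only 2-subset `s` of `Fin 2`.
  let s : Set.powersetCard (Fin 2) 2 := ⟨Finset.univ, by simp⟩
  have hs := (exteriorPower.ιMulti_family_linearIndependent_field (n := 2) h).ne_zero s
  have hid : ⇑(Set.powersetCard.ofFinEmbEquiv.symm s) = id := by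
    have h01 := (Set.powersetCard.ofFinEmbEquiv.symm s).lt_iff_lt.2
      (show (0 : Fin 2) < 1 by decide)
    ext i
    fin_cases i <;> simp <;> omega
  rw [ne_eq, ← Submodule.coe_eq_zero] at hs
  simpa [hid, exteriorPower.ιMulti_family, ιMulti_apply, List.ofFn_succ] using hs

theorem Module.Basis.coe_mem_span_pair {K M : Type*} [Semiring K] [AddCommMonoid M] [Module K M]
    {p : Submodule K M} (b : Basis (Fin 2) K p) {c : M} (hc : c ∈ p) :
    c ∈ Submodule.span K {(b 0 : M), (b 1 : M)} :=
  Submodule.mem_span_pair.2 ⟨b.repr ⟨c, hc⟩ 0, b.repr ⟨c, hc⟩ 1, by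
    have := congrArg Subtype.val (b.sum_repr ⟨c, hc⟩)
    rwa [Fin.sum_univ_two, Submodule.coe_add, Submodule.coe_smul, Submodule.coe_smul] at this⟩

def IsGradedCommutative {K A : Type*} [CommRing K] [Ring A] [Algebra K A]
    (𝒜 : ℕ → Submodule K A) : Prop :=
  ∀ (i j : ℕ) (a b : A), a ∈ 𝒜 i → b ∈ 𝒜 j → a * b = ((-1 : K) ^ (i * j)) • (b * a)

namespace IsGradedCommutative

variable {K A : Type*} [Field K] [Ring A] [Algebra K A] {𝒜 : ℕ → Submodule K A}
  (h𝒜 : IsGradedCommutative 𝒜) {a b : A}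

include h𝒜

theorem mul_eq_neg_mul_of_mem_one (ha : a ∈ 𝒜 1) (hb : b ∈ 𝒜 1) : a * b = -(b * a) := by
  simpa using h𝒜 1 1 a b ha hb

theorem mul_self_eq_zero_of_mem_one [NeZero (2 : K)] (ha : a ∈ 𝒜 1) : a * a = 0 := by
  have h2 : (2 : K) • (a * a) = 0 := by
    rw [two_smul]
    nth_rewrite 1 [h𝒜.mul_eq_neg_mul_of_mem_one ha ha]
    exact neg_add_cancel _
  exact (smul_eq_zero.mp h2).resolve_left two_ne_zero

theorem mul_mul_eq_zero_of_mem_span_pair [NeZero (2 : K)] {x y c : A} (hx : x ∈ 𝒜 1) (hy : y ∈ 𝒜 1)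
    (hc : c ∈ Submodule.span K {x, y}) : x * y * c = 0 := by
  obtain ⟨s, t, rfl⟩ := Submodule.mem_span_pair.1 hc
  have hxyx : x * y * x = 0 := by
    rw [mul_assoc, h𝒜.mul_eq_neg_mul_of_mem_one hy hx, mul_neg, ← mul_assoc,
      h𝒜.mul_self_eq_zero_of_mem_one hx, zero_mul, neg_zero]
  have hxyy : x * y * y = 0 := by rw [mul_assoc, h𝒜.mul_self_eq_zero_of_mem_one hy, mul_zero]
  rw [mul_add, mul_smul_comm, mul_smul_comm, hxyx, hxyy, smul_zero, smul_zero, add_zero]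

theorem basis_mul_eq_zero [NeZero (2 : K)] [SetLike.GradedMul 𝒜] (b : Module.Basis (Fin 2) K (𝒜 1))
    (hPD : ∀ a ∈ 𝒜 2, a ≠ 0 → ∃ c ∈ 𝒜 1, a * c ≠ 0) : (b 0 : A) * b 1 = 0 := by
  by_contra hne
  obtain ⟨c, hc, hc0⟩ := hPD _ (SetLike.mul_mem_graded (b 0).2 (b 1).2) hne
  exact hc0 (h𝒜.mul_mul_eq_zero_of_mem_span_pair (b 0).2 (b 1).2 (b.coe_mem_span_pair hc))

end IsGradedCommutative

theorem AlgHom.mul_ne_zero_of_map_mem_range_ι {K A E : Type*} [Field K] [Ring A] [Algebra K A]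
    [AddCommGroup E] [Module K E] {Φ : A →ₐ[K] ExteriorAlgebra K E} (hΦ : Function.Injective Φ)
    {x y : A} (hx : Φ x ∈ LinearMap.range (ι K)) (hy : Φ y ∈ LinearMap.range (ι K))
    (hxy : LinearIndependent K ![x, y]) : x * y ≠ 0 := by
  obtain ⟨u, hu⟩ := hx
  obtain ⟨v, hv⟩ := hy
  have huv : LinearIndependent K ![u, v] := by
    refine LinearIndependent.of_comp (ι K) ?_
    have hcomp : ι K ∘ ![u, v] = Φ.toLinearMap ∘ ![x, y] := by
      ext i
      fin_cases i <;> simp [hu, hv]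
    rw [hcomp]
    exact hxy.map' _ (LinearMap.ker_eq_bot.mpr hΦ)
  intro h0
  apply ι_mul_ι_ne_zero huv
  rw [hu, hv, ← map_mul, h0, map_zero]

theorem stmt_2_general {A : Type*} [Ring A] [Algebra ℝ A]
    (𝒜 : ℕ → Submodule ℝ A) [GradedAlgebra 𝒜]
    (hgc : ∀ (i j : ℕ) (a b : A), a ∈ 𝒜 i → b ∈ 𝒜 j →
      a * b = ((-1 : ℝ) ^ (i * j)) • (b * a))
    (hPD : ∀ k, k ≤ 3 → ∀ a ∈ 𝒜 k, a ≠ 0 → ∃ b ∈ 𝒜 (3 - k), a * b ≠ 0)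
    (Φ : A →ₐ[ℝ] ExteriorAlgebra ℝ (EuclideanSpace ℝ (Fin 3)))
    (hΦinj : Function.Injective Φ)
    (hΦgr : ∀ k, ∀ a ∈ 𝒜 k,
      Φ a ∈ (LinearMap.range (ExteriorAlgebra.ι ℝ : EuclideanSpace ℝ (Fin 3) →ₗ[ℝ]
        ExteriorAlgebra ℝ (EuclideanSpace ℝ (Fin 3))) ^ k :
        Submodule ℝ (ExteriorAlgebra ℝ (EuclideanSpace ℝ (Fin 3))))) :
    Module.finrank ℝ (𝒜 1) ≠ 2 := by
  intro h
  have : Module.Finite ℝ (𝒜 1) := Module.finite_of_finrank_eq_succ h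
  let b := Module.finBasisOfFinrankEq ℝ (𝒜 1) h
  have hb : LinearIndependent ℝ ![(b 0 : A), (b 1 : A)] := by
    have h01 : ![(b 0 : A), (b 1 : A)] = (𝒜 1).subtype ∘ b := by
      ext i
      fin_cases i <;> rfl
    exact h01 ▸ b.linearIndependent.map' _ (𝒜 1).ker_subtype
  have hΦι : ∀ a ∈ 𝒜 1, Φ a ∈ LinearMap.range (ι ℝ) := fun a ha => by
    simpa using hΦgr 1 a ha
  exact AlgHom.mul_ne_zero_of_map_mem_range_ι hΦinj (hΦι _ (b 0).2) (hΦι _ (b 1).2) hb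
    (IsGradedCommutative.basis_mul_eq_zero hgc b (hPD 2 (by norm_num)))

/-- If `A` is a finite-dimensional graded-commutative real algebra graded in
degrees 0..3 with Poincaré duality in dimension 3 (`A³` one-dimensional and the
multiplication pairing `A^k × A^{3-k} → A³` nondegenerate), and there is an injective
homomorphism of graded algebras `A → ⋀*(ℝ³)`, then `dim A¹ ≠ 2`. -/
theorem stmt_2 {A : Type*} [Ring A] [Algebra ℝ A] [FiniteDimensional ℝ A]
    (𝒜 : ℕ → Submodule ℝ A) [GradedAlgebra 𝒜]
    (htop : ∀ k, 3 < k → 𝒜 k = ⊥)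
    (hgc : ∀ (i j : ℕ) (a b : A), a ∈ 𝒜 i → b ∈ 𝒜 j →
      a * b = ((-1 : ℝ) ^ (i * j)) • (b * a))
    (hA3 : Module.finrank ℝ (𝒜 3) = 1)
    (hPD : ∀ k, k ≤ 3 → ∀ a ∈ 𝒜 k, a ≠ 0 → ∃ b ∈ 𝒜 (3 - k), a * b ≠ 0)
    (Φ : A →ₐ[ℝ] ExteriorAlgebra ℝ (EuclideanSpace ℝ (Fin 3)))
    (hΦinj : Function.Injective Φ)
    (hΦgr : ∀ k, ∀ a ∈ 𝒜 k,
      Φ a ∈ (LinearMap.range (ExteriorAlgebra.ι ℝ : EuclideanSpace ℝ (Fin 3) →ₗ[ℝ]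
        ExteriorAlgebra ℝ (EuclideanSpace ℝ (Fin 3))) ^ k :
        Submodule ℝ (ExteriorAlgebra ℝ (EuclideanSpace ℝ (Fin 3))))) :
    Module.finrank ℝ (𝒜 1) ≠ 2 :=
  stmt_2_general 𝒜 hgc hPD Φ hΦinj hΦgr
end

section
/- Let μ be an atomless Borel measure on ℝ^n with μ(ℝ^n) = ∞ and μ(B) < ∞ for every ball B. Then there exists a constant D = D(n) > 1 such that for every m ∈ ℕ there is a ball B ⊂ ℝ^n with m ≤ μ(2B) ≤ D·μ(B). -/
/-!
Let `N` be the number of balls of radius `1/2` needed to cover the ball of radius `2`, and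
`D = 2N`. By scaling, every ball `B(x, 2r)` has `μ(B(x, 2r)) ≤ N μ(B(y, r/2))` for some `y`
with `|y - x| ≤ 2r`. If no ball of measure at least `m` were `D`-doubling, then
`μ(B(y, r)) > D μ(B(y, r/2)) ≥ 2 μ(B(x, 2r))`: starting from a ball of large measure and
iterating, the measure doubles at each step while the radius halves and the centre moves by
at most twice the radius, so all these balls lie in one fixed ball, which would then have
infinite measure.
-/

open MeasureTheory Metric Filter
open scoped ENNReal Topology

section Metric

variable {X : Type*} [PseudoMetricSpace X] [MeasurableSpace X] {μ : Measure X}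

theorem exists_lt_measure_ball_of_measure_univ_eq_top (hμ : μ Set.univ = ⊤) (x : X)
    {a : ℝ≥0∞} (ha : a ≠ ⊤) : ∃ r : ℝ, 0 < r ∧ a < μ (ball x r) := by
  have hmono : Monotone fun k : ℕ => ball x (k : ℝ) :=
    fun _ _ hkl => ball_subset_ball (Nat.cast_le.mpr hkl)
  have hlim := tendsto_measure_iUnion_atTop (μ := μ) hmono
  rw [iUnion_ball_nat, hμ] at hlim
  obtain ⟨k, hk⟩ := (hlim.eventually (lt_mem_nhds ha.lt_top)).exists
  exact ⟨k + 1, by positivity,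
    hk.trans_le (measure_mono (ball_subset_ball (by linarith)))⟩

theorem measure_ball_eq_top_of_forall_two_mul_le {a : ℝ≥0∞}
    (hstep : ∀ x r, 0 < r → a ≤ μ (ball x (2 * r)) →
      ∃ y, dist y x ≤ 2 * r ∧ 2 * μ (ball x (2 * r)) ≤ μ (ball y r))
    {x₀ : X} {r₀ : ℝ} (hr₀ : 0 < r₀) (ha : a ≤ μ (ball x₀ (2 * r₀)))
    (h0 : μ (ball x₀ (2 * r₀)) ≠ 0) : μ (ball x₀ (4 * r₀)) = ⊤ := by
  set A := μ (ball x₀ (2 * r₀))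
  have hgrowth : ∀ k : ℕ, ∃ x r, 0 < r ∧ dist x x₀ ≤ 4 * (r₀ - r) ∧
      2 ^ k * A ≤ μ (ball x (2 * r)) := by
    intro k
    induction k with
    | zero => exact ⟨x₀, r₀, hr₀, by simp, by simp [A]⟩
    | succ k ih =>
      obtain ⟨x, r, hr, hx, hA⟩ := ih
      have haA : a ≤ μ (ball x (2 * r)) :=
        ha.trans (le_mul_of_one_le_left' (one_le_pow₀ one_le_two)) |>.trans hA
      obtain ⟨y, hyx, hy⟩ := hstep x r hr haA
      refine ⟨y, r / 2, half_pos hr, ?_, ?_⟩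
      · linarith [dist_triangle y x x₀]
      · calc 2 ^ (k + 1) * A = 2 * (2 ^ k * A) := by ring
          _ ≤ 2 * μ (ball x (2 * r)) := by gcongr
          _ ≤ μ (ball y (2 * (r / 2))) := by rwa [mul_div_cancel₀ r two_ne_zero]
  have hbound : ∀ k : ℕ, 2 ^ k * A ≤ μ (ball x₀ (4 * r₀)) := by
    intro k
    obtain ⟨x, r, hr, hx, hA⟩ := hgrowth k
    refine hA.trans (measure_mono fun z hz => ?_)
    rw [mem_ball] at hz ⊢
    linarith [dist_triangle z x x₀]
  have hlim : Tendsto (fun k : ℕ => 2 ^ k * A) atTop (𝓝 ⊤) := by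
    have h := ENNReal.Tendsto.mul_const (b := A)
      (ENNReal.tendsto_pow_atTop_nhds_top_iff.mpr ENNReal.one_lt_two) (Or.inl ENNReal.top_ne_zero)
    rwa [ENNReal.top_mul h0] at h
  exact top_unique (le_of_tendsto' hlim hbound)

end Metric

section Hunting

variable {E : Type*} [NormedAddCommGroup E] [NormedSpace ℝ E]

theorem ball_two_mul_subset_biUnion_ball_half {t : Set E}
    (ht : ball (0 : E) 2 ⊆ ⋃ c ∈ t, ball c (1 / 2)) (x : E) {r : ℝ} (hr : 0 < r) :
    ball x (2 * r) ⊆ ⋃ c ∈ t, ball (x + r • c) (r / 2) := by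
  intro z hz
  have hw : r⁻¹ • (z - x) ∈ ball (0 : E) 2 := by
    rw [mem_ball_zero_iff, norm_smul, norm_inv, Real.norm_of_nonneg hr.le, inv_mul_lt_iff₀ hr,
      ← dist_eq_norm, mul_comm]
    exact hz
  obtain ⟨c, hc, hwc⟩ := Set.mem_iUnion₂.mp (ht hw)
  refine Set.mem_iUnion₂.mpr ⟨c, hc, ?_⟩
  have hzc : z - (x + r • c) = r • (r⁻¹ • (z - x) - c) := by
    rw [smul_sub, smul_inv_smul₀ hr.ne']
    abel
  rw [mem_ball, dist_eq_norm, hzc, norm_smul, Real.norm_of_nonneg hr.le, ← dist_eq_norm]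
  rw [mem_ball] at hwc
  linarith [mul_lt_mul_of_pos_left hwc hr]

variable [ProperSpace E] [MeasurableSpace E]

variable (E) in
theorem exists_measure_ball_le_mul_measure_ball_half :
    ∃ N : ℕ, 0 < N ∧ ∀ (μ : Measure E) (x : E) (r : ℝ), 0 < r →
      ∃ y, dist y x ≤ 2 * r ∧ μ (ball x (2 * r)) ≤ N * μ (ball y (r / 2)) := by
  obtain ⟨t, ht_sub, ht_fin, ht_cover⟩ :=
    finite_cover_balls_of_compact (isCompact_closedBall (0 : E) 2) (by norm_num : (0 : ℝ) < 1 / 2)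
  have ht_ne : ht_fin.toFinset.Nonempty := by
    obtain ⟨c, hc, -⟩ := Set.mem_iUnion₂.mp (ht_cover (mem_closedBall_self zero_le_two))
    exact ⟨c, ht_fin.mem_toFinset.mpr hc⟩
  refine ⟨ht_fin.toFinset.card, ht_ne.card_pos, fun μ x r hr => ?_⟩
  obtain ⟨c, hc, hc_max⟩ :=
    ht_fin.toFinset.exists_max_image (fun c => μ (ball (x + r • c) (r / 2))) ht_ne
  refine ⟨x + r • c, ?_, ?_⟩
  · have hc2 : ‖c‖ ≤ 2 := mem_closedBall_zero_iff.mp (ht_sub (ht_fin.mem_toFinset.mp hc))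
    rw [dist_eq_norm, add_sub_cancel_left, norm_smul, Real.norm_of_nonneg hr.le, mul_comm]
    exact mul_le_mul_of_nonneg_right hc2 hr.le
  · have hcover := ball_two_mul_subset_biUnion_ball_half
      (ball_subset_closedBall.trans (ht_fin.coe_toFinset.symm ▸ ht_cover)) x hr
    calc μ (ball x (2 * r)) ≤ μ (⋃ c ∈ ht_fin.toFinset, ball (x + r • c) (r / 2)) :=
          measure_mono (by simpa using hcover)
      _ ≤ ∑ c ∈ ht_fin.toFinset, μ (ball (x + r • c) (r / 2)) :=
          measure_biUnion_finset_le _ _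
      _ ≤ ht_fin.toFinset.card * μ (ball (x + r • c) (r / 2)) := by
          rw [← nsmul_eq_mul]; exact Finset.sum_le_card_nsmul _ _ _ hc_max

variable (E) in
theorem exists_ball_doubling_of_measure_univ_eq_top :
    ∃ D : ℕ, 1 < D ∧ ∀ μ : Measure E, μ Set.univ = ⊤ →
      (∀ (x : E) (r : ℝ), μ (ball x r) < ⊤) →
      ∀ m : ℕ, ∃ (x : E) (r : ℝ), 0 < r ∧ (m : ℝ≥0∞) ≤ μ (ball x (2 * r)) ∧
        μ (ball x (2 * r)) ≤ D * μ (ball x r) := by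
  obtain ⟨N, hN, hheavy⟩ := exists_measure_ball_le_mul_measure_ball_half E
  refine ⟨2 * N, by omega, fun μ hμ hball m => ?_⟩
  by_contra! hcon
  have hstep : ∀ (x : E) (r : ℝ), 0 < r → N * (m : ℝ≥0∞) ≤ μ (ball x (2 * r)) →
      ∃ y, dist y x ≤ 2 * r ∧ 2 * μ (ball x (2 * r)) ≤ μ (ball y r) := by
    intro x r hr hNm
    obtain ⟨y, hyx, hy⟩ := hheavy μ x r hr
    have hm : (m : ℝ≥0∞) ≤ μ (ball y (r / 2)) :=
      (ENNReal.mul_le_mul_iff_right (by exact_mod_cast hN.ne') (ENNReal.natCast_ne_top N)).mp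
        (hNm.trans hy)
    have hr2 : 2 * (r / 2) = r := mul_div_cancel₀ r two_ne_zero
    have hnot := hcon y (r / 2) (half_pos hr)
      (hm.trans (measure_mono (ball_subset_ball (by linarith))))
    refine ⟨y, hyx, ?_⟩
    calc 2 * μ (ball x (2 * r)) ≤ 2 * (N * μ (ball y (r / 2))) := by gcongr
      _ = ((2 * N : ℕ) : ℝ≥0∞) * μ (ball y (r / 2)) := by push_cast; ring
      _ ≤ μ (ball y r) := by rw [hr2] at hnot; exact hnot.le
  obtain ⟨r, hr, hr_big⟩ := exists_lt_measure_ball_of_measure_univ_eq_top hμ (0 : E)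
    (ENNReal.mul_ne_top (ENNReal.natCast_ne_top N) (ENNReal.natCast_ne_top m))
  rw [← mul_div_cancel₀ r two_ne_zero] at hr_big
  have htop := measure_ball_eq_top_of_forall_two_mul_le hstep (half_pos hr) hr_big.le
    (pos_of_gt hr_big).ne'
  exact (hball 0 _).ne htop

end Hunting

theorem stmt_4_general (n : ℕ) :
    ∃ D : ℝ, 1 < D ∧
      ∀ μ : Measure (EuclideanSpace ℝ (Fin n)),
        NoAtoms μ →
        μ Set.univ = ⊤ →
        (∀ (x : EuclideanSpace ℝ (Fin n)) (r : ℝ), μ (ball x r) < ⊤) →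
        ∀ m : ℕ, ∃ (x : EuclideanSpace ℝ (Fin n)) (r : ℝ), 0 < r ∧
          (m : ℝ≥0∞) ≤ μ (ball x (2 * r)) ∧
          μ (ball x (2 * r)) ≤ ENNReal.ofReal D * μ (ball x r) := by
  obtain ⟨D, hD, hdoubling⟩ :=
    exists_ball_doubling_of_measure_univ_eq_top (EuclideanSpace ℝ (Fin n))
  refine ⟨D, by exact_mod_cast hD, fun μ _ hμ hball m => ?_⟩
  simpa only [ENNReal.ofReal_natCast] using hdoubling μ hμ hball m

/-- Rickman's Hunting Lemma, Bonk–Poggi-Corradini formulation: for every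
dimension `n` there is a constant `D = D(n) > 1` such that every atomless Borel measure
`μ` on `ℝ^n` with `μ(ℝ^n) = ∞` which is finite on balls admits, for every `m ∈ ℕ`,
a ball `B` with `m ≤ μ(2B) ≤ D·μ(B)`. -/
theorem stmt_4 (n : ℕ) (hn : 1 ≤ n) :
    ∃ D : ℝ, 1 < D ∧
      ∀ μ : Measure (EuclideanSpace ℝ (Fin n)),
        NoAtoms μ →
        μ Set.univ = ⊤ →
        (∀ (x : EuclideanSpace ℝ (Fin n)) (r : ℝ), μ (ball x r) < ⊤) →
        ∀ m : ℕ, ∃ (x : EuclideanSpace ℝ (Fin n)) (r : ℝ), 0 < r ∧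
          (m : ℝ≥0∞) ≤ μ (ball x (2 * r)) ∧
          μ (ball x (2 * r)) ≤ ENNReal.ofReal D * μ (ball x r) :=
  stmt_4_general n
end

section
/- Let f : B(0,2) → ℝ^n be a measurable map in W^{1,n}_loc whose weak differential satisfies ‖Df‖^n ≤ K·J_f almost everywhere, and suppose ∫_{B(0,2)} J_f ≤ D·∫_{B(0,1)} J_f with A := ∫_{B(0,1)} J_f > 0. Then for every bounded measurable k-covector-valued coefficient field α with ‖α‖_∞ < ∞ (thought of as a k-form along f), the normalized pullback f^!α := A^{-k/n} f^*α satisfies the L^{n/k} bound ‖f^!α‖_{L^{n/k}(B(0,2))} ≤ D·K·‖α‖_∞. -/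
open MeasureTheory Metric

/-!
With `p = n/k`, the normalisation gives `(A^{-k/n} g)^p = A⁻¹ g^p`, and the pointwise bound
`g ≤ M ‖Df‖^k` turns this into `A⁻¹ M^p ‖Df‖^n ≤ A⁻¹ M^p K J`. Integrating over `B(0,2)` and
using the doubling of `J` gives `∫ (A^{-k/n} g)^p ≤ M^p K D`; taking the `1/p`-th root costs
nothing more because `K D ≥ 1` and `1/p ≤ 1`.
-/

namespace Real

theorem pow_rpow_natCast_div_natCast {t : ℝ} (ht : 0 ≤ t) (n : ℕ) {k : ℕ} (hk : k ≠ 0) :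
    (t ^ k) ^ ((n : ℝ) / k) = t ^ n := by
  rw [← rpow_natCast t k, ← rpow_mul ht, ← rpow_natCast t n]
  congr 1
  field_simp

theorem rpow_neg_div_mul_rpow_div {A y : ℝ} (hA : 0 ≤ A) (hy : 0 ≤ y) {a b : ℝ}
    (ha : a ≠ 0) (hb : b ≠ 0) :
    (A ^ (-b / a) * y) ^ (a / b) = A⁻¹ * y ^ (a / b) := by
  have hexp : -b / a * (a / b) = -1 := by field_simp
  rw [mul_rpow (rpow_nonneg hA _) hy, ← rpow_mul hA, hexp, rpow_neg_one]

theorem rpow_natCast_div_le_of_le_mul_pow {g t M K j : ℝ} {n k : ℕ} (hk : k ≠ 0)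
    (hg0 : 0 ≤ g) (ht : 0 ≤ t) (hM : 0 ≤ M)
    (hg : g ≤ M * t ^ k) (htn : t ^ n ≤ K * j) :
    g ^ ((n : ℝ) / k) ≤ M ^ ((n : ℝ) / k) * (K * j) :=
  calc g ^ ((n : ℝ) / k) ≤ (M * t ^ k) ^ ((n : ℝ) / k) := by gcongr
    _ = M ^ ((n : ℝ) / k) * t ^ n := by
      rw [mul_rpow hM (by positivity), pow_rpow_natCast_div_natCast ht n hk]
    _ ≤ M ^ ((n : ℝ) / k) * (K * j) := by gcongr

theorem rpow_mul_rpow_le_mul {M L p s : ℝ} (hM : 0 ≤ M) (hL : 1 ≤ L)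
    (hps : p * s = 1) (hs1 : s ≤ 1) :
    (M ^ p * L) ^ s ≤ M * L := by
  rw [mul_rpow (rpow_nonneg hM p) (by linarith), ← rpow_mul hM, hps, rpow_one]
  gcongr
  simpa using rpow_le_rpow_of_exponent_le hL hs1

end Real

theorem integral_le_const_mul_integral_of_ae_le {X : Type*} [MeasurableSpace X]
    {μ : Measure X} {h J : X → ℝ} {c : ℝ} (hJ : Integrable J μ) (h0 : 0 ≤ᵐ[μ] h)
    (hle : ∀ᵐ x ∂μ, h x ≤ c * J x) :
    ∫ x, h x ∂μ ≤ c * ∫ x, J x ∂μ := by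
  rw [← integral_const_mul]
  exact integral_mono_of_nonneg h0 (hJ.const_mul c) hle

theorem stmt_5_general (n m k : ℕ) (hk1 : 1 ≤ k) (hkn : k ≤ n)
    (K D M A : ℝ) (hK : 1 ≤ K) (hD : 1 < D)
    (f : EuclideanSpace ℝ (Fin n) → EuclideanSpace ℝ (Fin m))
    (Df : EuclideanSpace ℝ (Fin n) → (EuclideanSpace ℝ (Fin n) →L[ℝ] EuclideanSpace ℝ (Fin m)))
    (J : EuclideanSpace ℝ (Fin n) → ℝ)
    (hJint : IntegrableOn J (ball (0 : EuclideanSpace ℝ (Fin n)) 2))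
    (hdist : ∀ᵐ x ∂(volume.restrict (ball (0 : EuclideanSpace ℝ (Fin n)) 2)),
      ‖Df x‖ ^ n ≤ K * J x)
    (hdoub : ∫ x in ball (0 : EuclideanSpace ℝ (Fin n)) 2, J x ≤
      D * ∫ x in ball (0 : EuclideanSpace ℝ (Fin n)) 1, J x)
    (hA : A = ∫ x in ball (0 : EuclideanSpace ℝ (Fin n)) 1, J x) (hApos : 0 < A)
    {V : Type*} [NormedAddCommGroup V]
    (α : EuclideanSpace ℝ (Fin m) → V)
    (hM : ∀ y, ‖α y‖ ≤ M)
    (g : EuclideanSpace ℝ (Fin n) → ℝ)   -- g = |f^*α|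
    (hg0 : ∀ x, 0 ≤ g x)
    (hgle : ∀ᵐ x ∂(volume.restrict (ball (0 : EuclideanSpace ℝ (Fin n)) 2)),
      g x ≤ ‖α (f x)‖ * ‖Df x‖ ^ k) :
    (∫ x in ball (0 : EuclideanSpace ℝ (Fin n)) 2,
        (A ^ (-(k : ℝ) / (n : ℝ)) * g x) ^ ((n : ℝ) / (k : ℝ))) ^ ((k : ℝ) / (n : ℝ)) ≤
      D * K * M := by
  have hk : k ≠ 0 := by omega
  have hn : (n : ℝ) ≠ 0 := by norm_cast; omega
  have hM0 : 0 ≤ M := (norm_nonneg _).trans (hM 0)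
  have hpointwise : ∀ᵐ x ∂(volume.restrict (ball (0 : EuclideanSpace ℝ (Fin n)) 2)),
      (A ^ (-(k : ℝ) / n) * g x) ^ ((n : ℝ) / k) ≤ A⁻¹ * M ^ ((n : ℝ) / k) * K * J x := by
    filter_upwards [hdist, hgle] with x hDf hgx
    rw [Real.rpow_neg_div_mul_rpow_div hApos.le (hg0 x) hn (by exact_mod_cast hk),
      mul_assoc _ K, mul_assoc]
    gcongr
    exact Real.rpow_natCast_div_le_of_le_mul_pow hk (hg0 x) (norm_nonneg _) hM0
      (hgx.trans (by gcongr; exact hM _)) hDf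
  have hintegral : ∫ x in ball (0 : EuclideanSpace ℝ (Fin n)) 2,
      (A ^ (-(k : ℝ) / n) * g x) ^ ((n : ℝ) / k) ≤ M ^ ((n : ℝ) / k) * (K * D) :=
    calc _ ≤ A⁻¹ * M ^ ((n : ℝ) / k) * K * ∫ x in ball (0 : EuclideanSpace ℝ (Fin n)) 2, J x :=
          integral_le_const_mul_integral_of_ae_le hJint
            (ae_of_all _ fun x => by positivity [hg0 x]) hpointwise
      _ ≤ A⁻¹ * M ^ ((n : ℝ) / k) * K * (D * A) := by rw [hA] at hApos ⊢; gcongr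
      _ = M ^ ((n : ℝ) / k) * (K * D) := by field_simp
  calc _ ≤ (M ^ ((n : ℝ) / k) * (K * D)) ^ ((k : ℝ) / n) := by
        gcongr
        exact integral_nonneg fun x => by positivity [hg0 x]
    _ ≤ M * (K * D) := Real.rpow_mul_rpow_le_mul hM0 (by nlinarith)
        (by field_simp) (div_le_one_of_le₀ (by exact_mod_cast hkn) (by positivity))
    _ = D * K * M := by ring

/-- Lemma 3.1 of the paper, Euclidean-target setting: for a quasiregular-type
map `f` on `B(0,2)` with distortion constant `K` and doubling constant `D` for its Jacobian
density `J`, and `A = ∫_{B(0,1)} J > 0`, the normalized pullback `f^!α = A^{-k/n} f^*α` of a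
bounded `k`-form `α` (whose pullback `g = |f^*α|` satisfies the pointwise bound
`g ≤ |α ∘ f|·‖Df‖^k`) satisfies `‖f^!α‖_{L^{n/k}(B(0,2))} ≤ D·K·‖α‖_∞`. -/
theorem stmt_5 (n m k : ℕ) (hn : 2 ≤ n) (hk1 : 1 ≤ k) (hkn : k ≤ n)
    (K D M A : ℝ) (hK : 1 ≤ K) (hD : 1 < D)
    (f : EuclideanSpace ℝ (Fin n) → EuclideanSpace ℝ (Fin m))
    (Df : EuclideanSpace ℝ (Fin n) → (EuclideanSpace ℝ (Fin n) →L[ℝ] EuclideanSpace ℝ (Fin m)))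
    (J : EuclideanSpace ℝ (Fin n) → ℝ)
    (hJ0 : ∀ x, 0 ≤ J x)
    (hJint : IntegrableOn J (ball (0 : EuclideanSpace ℝ (Fin n)) 2))
    (hdist : ∀ᵐ x ∂(volume.restrict (ball (0 : EuclideanSpace ℝ (Fin n)) 2)),
      ‖Df x‖ ^ n ≤ K * J x)
    (hdoub : ∫ x in ball (0 : EuclideanSpace ℝ (Fin n)) 2, J x ≤
      D * ∫ x in ball (0 : EuclideanSpace ℝ (Fin n)) 1, J x)
    (hA : A = ∫ x in ball (0 : EuclideanSpace ℝ (Fin n)) 1, J x) (hApos : 0 < A)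
    {V : Type*} [NormedAddCommGroup V]
    (α : EuclideanSpace ℝ (Fin m) → V)
    (hM : ∀ y, ‖α y‖ ≤ M)
    (g : EuclideanSpace ℝ (Fin n) → ℝ)   -- g = |f^*α|
    (hg0 : ∀ x, 0 ≤ g x) (hgmeas : Measurable g)
    (hgle : ∀ᵐ x ∂(volume.restrict (ball (0 : EuclideanSpace ℝ (Fin n)) 2)),
      g x ≤ ‖α (f x)‖ * ‖Df x‖ ^ k) :
    (∫ x in ball (0 : EuclideanSpace ℝ (Fin n)) 2,
        (A ^ (-(k : ℝ) / (n : ℝ)) * g x) ^ ((n : ℝ) / (k : ℝ))) ^ ((k : ℝ) / (n : ℝ)) ≤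
      D * K * M :=
  stmt_5_general n m k hk1 hkn K D M A hK hD f Df J hJint hdist hdoub hA hApos α hM g hg0 hgle
end
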